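/- Let N ≥ 1, n = ⌊log₂ N⌋, and p = 2^{-n} − 1/N. Then the trace distance between the flat spectrum ρ̄(N) (padded with zeros to length 2^{n+1}) and the ansatz σ = (1/N,...,1/N, p,...,p) equals 3 − N/2^n − 2^{n+1}/N. That is, (1/2)·[ (N−2^n)·|1/N − p| + (2^{n+1}−N)·p ] = 3 − N/2^n − 2^{n+1}/N. -/
import Mathlib

/-- With `N ≥ 1`, `n = ⌊log₂ N⌋` and `p = 2^{-n} - 1/N`, the trace
distance between the zero-padded flat spectrum of rank `N` and the ansatz
`σ = (1/N,…,1/N,p,…,p)`, namely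
`(1/2)·[(N−2^n)·|1/N − p| + (2^{n+1}−N)·p]`, equals `3 − N/2^n − 2^{n+1}/N`. -/
theorem trace_distance_ansatz (N n : ℕ) (hN : 1 ≤ N) (hn : n = Nat.log 2 N) :
    (1 / 2 : ℝ) *
        (((N : ℝ) - 2 ^ n) * |(N : ℝ)⁻¹ - (((2 : ℝ) ^ n)⁻¹ - (N : ℝ)⁻¹)|
          + ((2 : ℝ) ^ (n + 1) - (N : ℝ)) * (((2 : ℝ) ^ n)⁻¹ - (N : ℝ)⁻¹))
      = 3 - (N : ℝ) / 2 ^ n - (2 : ℝ) ^ (n + 1) / (N : ℝ) := by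
  have h2 : N < 2 ^ (n + 1) := by
    rw [hn]; exact Nat.lt_pow_succ_log_self (by norm_num) N
  have h2R : (N : ℝ) < 2 ^ (n + 1) := by exact_mod_cast h2
  have hNpos : (0 : ℝ) < N := by exact_mod_cast hN
  have hpow : (0 : ℝ) < 2 ^ n := by positivity
  have habs : |(N : ℝ)⁻¹ - (((2 : ℝ) ^ n)⁻¹ - (N : ℝ)⁻¹)|
      = (N : ℝ)⁻¹ - (((2 : ℝ) ^ n)⁻¹ - (N : ℝ)⁻¹) := by
    apply abs_of_nonneg
    have : ((2 : ℝ) ^ n)⁻¹ ≤ 2 * (N : ℝ)⁻¹ := by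
      rw [inv_le_iff_one_le_mul₀ hpow, pow_succ] at *
      have hinv : (N : ℝ) * (N : ℝ)⁻¹ = 1 := by field_simp
      nlinarith [inv_pos.mpr hNpos]
    linarith
  rw [habs]
  field_simp
  ring
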